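/- arXiv:2009.11605 — 2 statements merged into one kernel-verified Lean document; each statement's English description precedes it below -/
import Mathlib

section
/- For every positive integer t and nonnegative integer n, p_{2t,t}(n) = p(n) + Σ_{r≥1} p(n − 4t·r²) − Σ_{s≥1} p(n − t(2s−1)²), where p(m) = 0 for negative m. -/
open PowerSeries Finset

/-- The ordinary partition function `p`, extended by zero to negative integers. -/
noncomputable def pInt (m : ℤ) : ℤ :=
  if 0 ≤ m then (Fintype.card (Nat.Partition m.toNat) : ℤ) else 0

/-- `(q^t; q^t)_∞ = ∏_{j ≥ 1} (1 - q^{t j})` as a formal power series over ℤ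
(the `n`-th coefficient only depends on the factors with `t(j+1) ≤ n`, so the
truncated finite product gives the correct coefficient). -/
noncomputable def euler (t : ℕ) : PowerSeries ℤ :=
  PowerSeries.mk fun n =>
    PowerSeries.coeff n
      (∏ j ∈ Finset.range (n + 1), (1 - (PowerSeries.X : PowerSeries ℤ) ^ (t * (j + 1))))

/-- `Σ_{k ≥ 0} (-1)^k q^{t k (k+1)/2}` as a formal power series over ℤ. -/
noncomputable def theta (t : ℕ) : PowerSeries ℤ :=
  PowerSeries.mk fun m =>
    ∑ k ∈ Finset.range (m + 1), if 2 * m = t * k * (k + 1) then (-1 : ℤ) ^ k else 0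

/-- `Σ_{k ≥ 0} (-1)^k q^{t k^2}` as a formal power series over ℤ. -/
noncomputable def thetaSq (t : ℕ) : PowerSeries ℤ :=
  PowerSeries.mk fun m =>
    ∑ k ∈ Finset.range (m + 1), if m = t * k ^ 2 then (-1 : ℤ) ^ k else 0

/-- `(-q^a; q^k)_∞ = ∏_{j ≥ 0} (1 + q^{a + k j})` as a formal power series over ℤ. -/
noncomputable def aqk (a k : ℕ) : PowerSeries ℤ :=
  PowerSeries.mk fun n =>
    PowerSeries.coeff n
      (∏ j ∈ Finset.range (n + 1), (1 + (PowerSeries.X : PowerSeries ℤ) ^ (a + k * j)))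

/-- Extension of a function on ℕ by zero to ℤ. -/
noncomputable def extZ (f : ℕ → ℤ) : ℤ → ℤ := fun m => if 0 ≤ m then f m.toNat else 0

/-! Multiplying by the partition generating function `∑ p(n) qⁿ = 1 / (q;q)_∞` gives
`p_{2t,t}(n) = ∑_{k ≥ 0} (-1)ᵏ p(n - t k²)`. The even indices `k = 2r` give the terms
`p(n - 4t r²)` and the odd indices `k = 2s - 1` the subtracted ones. -/

open PowerSeries.WithPiTopology

section EulerProduct

variable {R : Type*} [CommRing R] [TopologicalSpace R] [T2Space R]

theorem coeff_tprod_one_sub_X_pow {d m : ℕ} (hdm : d ≤ m) :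
    coeff d (∏' i, (1 - X ^ (i + 1) : R⟦X⟧)) =
      coeff d (∏ i ∈ range m, (1 - X ^ (i + 1) : R⟦X⟧)) := by
  nontriviality R
  have hcoeff := (tendsto_iff_coeff_tendsto R _ _ _).mp
    (multipliable_one_sub_X_pow R).hasProd d
  refine tendsto_nhds_unique hcoeff (tendsto_const_nhds.congr' ?_)
  filter_upwards [Filter.eventually_ge_atTop (range m)] with s hs
  rw [← prod_sdiff hs, mul_comm]
  refine (coeff_mul_prod_one_sub_of_lt_order d _ _ _ fun i hi => ?_).symm
  have : m ≤ i := by simpa using (mem_sdiff.mp hi).2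
  rw [order_X_pow]
  exact_mod_cast (by omega : d < i + 1)

theorem partitionSeries_mul_tprod_one_sub_X_pow [IsTopologicalRing R] :
    (PowerSeries.mk fun n => (Fintype.card n.Partition : R)) *
      ∏' i, (1 - X ^ (i + 1) : R⟦X⟧) = 1 := by
  have hgen := Nat.Partition.hasProd_powerSeriesMk_card_restricted R (fun _ => True)
  have hcard (n : ℕ) :
      #(Nat.Partition.restricted n fun _ => True) = Fintype.card n.Partition := by
    simp [Nat.Partition.restricted]
  simp only [hcard, if_true] at hgen
  refine (hgen.mul (multipliable_one_sub_X_pow R).hasProd).unique ?_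
  convert hasProd_one with i
  simp_rw [pow_mul]
  exact tsum_pow_mul_one_sub_of_constantCoeff_eq_zero (by simp)

end EulerProduct

theorem euler_one_eq_tprod : euler 1 = ∏' i, (1 - X ^ (i + 1) : ℤ⟦X⟧) := by
  ext d
  rw [euler, coeff_mk, coeff_tprod_one_sub_X_pow (Nat.le_succ d)]
  simp only [one_mul]

theorem extZ_natCast_sub (g : ℕ → ℤ) (n m : ℕ) :
    extZ g ((n : ℤ) - m) = if m ≤ n then g (n - m) else 0 := by
  unfold extZ
  split_ifs <;> (try congr 1) <;> omega

theorem coeff_thetaSq (t : ℕ) (ht : 0 < t) {i n : ℕ} (hin : i ≤ n) :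
    coeff i (thetaSq t) = ∑ k ∈ range (n + 1), if i = t * k ^ 2 then (-1 : ℤ) ^ k else 0 := by
  rw [thetaSq, coeff_mk]
  refine sum_subset (range_subset_range.mpr (by omega)) fun k _ hk => if_neg ?_
  have : i < k := by simpa using hk
  nlinarith

theorem coeff_thetaSq_mul (t : ℕ) (ht : 0 < t) (g : ℕ → ℤ) (n : ℕ) :
    coeff n (thetaSq t * PowerSeries.mk g) =
      ∑ k ∈ range (n + 1), (-1 : ℤ) ^ k * extZ g ((n : ℤ) - t * k ^ 2) := by
  rw [coeff_mul, Nat.sum_antidiagonal_eq_sum_range_succ_mk]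
  calc ∑ i ∈ range (n + 1), coeff i (thetaSq t) * coeff (n - i) (PowerSeries.mk g)
      = ∑ i ∈ range (n + 1), ∑ k ∈ range (n + 1),
          if i = t * k ^ 2 then (-1 : ℤ) ^ k * g (n - i) else 0 := by
        refine sum_congr rfl fun i hi => ?_
        rw [coeff_thetaSq t ht (Nat.lt_succ_iff.mp (mem_range.mp hi)), coeff_mk, sum_mul]
        simp only [ite_mul, zero_mul]
    _ = ∑ k ∈ range (n + 1), (-1 : ℤ) ^ k * extZ g ((n : ℤ) - t * k ^ 2) := by
        rw [sum_comm]
        refine sum_congr rfl fun k _ => ?_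
        have hcast : (n : ℤ) - t * k ^ 2 = n - ((t * k ^ 2 : ℕ) : ℤ) := by push_cast; ring
        simp only [sum_ite_eq', mem_range, Nat.lt_succ_iff, hcast, extZ_natCast_sub, mul_ite,
          mul_zero]

theorem sum_range_two_mul {M : Type*} [AddCommMonoid M] (g : ℕ → M) (m : ℕ) :
    ∑ k ∈ range (2 * m), g k = ∑ r ∈ range m, (g (2 * r) + g (2 * r + 1)) := by
  induction m with
  | zero => simp
  | succ m ih =>
    rw [mul_add, mul_one, sum_range_succ, sum_range_succ, sum_range_succ, ih, add_assoc]

theorem pInt_eq_extZ : pInt = extZ fun n => (Fintype.card n.Partition : ℤ) := rfl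

theorem pInt_of_neg {m : ℤ} (hm : m < 0) : pInt m = 0 := if_neg hm.not_ge

theorem sum_range_neg_one_pow_mul_pInt (t : ℕ) (ht : 0 < t) (n : ℕ) :
    ∑ k ∈ range (n + 1), (-1 : ℤ) ^ k * pInt ((n : ℤ) - t * k ^ 2) =
      pInt n + ∑ r ∈ range n, pInt ((n : ℤ) - 4 * t * (r + 1) ^ 2)
        - ∑ s ∈ range n, pInt ((n : ℤ) - t * (2 * (s + 1) - 1) ^ 2) := by
  set a : ℕ → ℤ := fun k => (-1 : ℤ) ^ k * pInt ((n : ℤ) - t * k ^ 2)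
  have hvanish : ∀ k ∈ range (2 * n + 1), k ∉ range (n + 1) → a k = 0 := by
    intro k _ hk
    have hnk : (n : ℤ) < k := by simp only [mem_range, not_lt] at hk; omega
    have ht' : (1 : ℤ) ≤ t := by exact_mod_cast ht
    simp only [a, pInt_of_neg (by nlinarith : (n : ℤ) - t * k ^ 2 < 0), mul_zero]
  have hzero : a 0 = pInt n := by simp [a]
  have hodd (r : ℕ) : a (2 * r + 1) = -pInt ((n : ℤ) - t * (2 * (r + 1) - 1) ^ 2) := by
    simp only [a, Odd.neg_one_pow (odd_two_mul_add_one r), neg_one_mul]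
    push_cast; ring_nf
  have heven (r : ℕ) : a (2 * r + 1 + 1) = pInt ((n : ℤ) - 4 * t * (r + 1) ^ 2) := by
    simp only [a, Even.neg_one_pow (⟨r + 1, by ring⟩ : Even (2 * r + 1 + 1)), one_mul]
    push_cast; ring_nf
  calc ∑ k ∈ range (n + 1), a k
      = ∑ k ∈ range (2 * n + 1), a k := sum_subset (range_subset_range.mpr (by omega)) hvanish
    _ = a 0 + ∑ r ∈ range n, (a (2 * r + 1) + a (2 * r + 1 + 1)) := by
        rw [sum_range_succ', sum_range_two_mul, add_comm]
    _ = _ := by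
        simp only [hzero, hodd, heven, sum_add_distrib, sum_neg_distrib]
        ring

/-- For every positive integer t and nonnegative integer n,
p_{2t,t}(n) = p(n) + Σ_{r≥1} p(n − 4t r²) − Σ_{s≥1} p(n − t(2s−1)²),
where p_{2t,t} is defined by Σ p_{2t,t}(n) qⁿ = (1/(q;q)_∞) Σ (−1)ⁿ q^{t n²}. -/
theorem stmt1 (t : ℕ) (ht : 0 < t) (f : ℕ → ℤ)
    (hf : PowerSeries.mk f * euler 1 = thetaSq t) (n : ℕ) :
    f n = pInt n
      + ∑ r ∈ Finset.range n, pInt ((n : ℤ) - 4 * t * (r + 1) ^ 2)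
      - ∑ s ∈ Finset.range n, pInt ((n : ℤ) - t * (2 * (s + 1) - 1) ^ 2) := by
  set P : ℤ⟦X⟧ := PowerSeries.mk fun n => (Fintype.card n.Partition : ℤ)
  have hP : P * euler 1 = 1 := by
    rw [euler_one_eq_tprod]; exact partitionSeries_mul_tprod_one_sub_X_pow
  have hf' : PowerSeries.mk f = thetaSq t * P := by
    rw [← hf, mul_assoc, mul_comm (euler 1), hP, mul_one]
  rw [← sum_range_neg_one_pow_mul_pInt t ht, pInt_eq_extZ, ← coeff_thetaSq_mul t ht, ← hf',
    coeff_mk]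
end

section
/- For every positive integer t and every nonnegative integer n, p_{t,t}(n) ≡ C̄_{4t,t}(n) (mod 2). -/
open PowerSeries Finset

/-!
Modulo 2 the signs of `theta t` disappear, and what remains is the exact identity
`∑_{k ≥ 0} q^{t k(k+1)/2} = (q^{4t};q^{4t})_∞ (-q^t;q^{4t})_∞ (-q^{3t};q^{4t})_∞`,
Jacobi's triple product at `q ↦ q^{2t}`, `z = q^t`; the unit `euler 1` then cancels.

The triple product is obtained from its finite form: with `h(i) = i(2i-1)` the generalized
hexagonal (= triangular) numbers and `[m, k]` the Gaussian binomials in `q = u^4`,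
`∑_{k ≤ 2N} [2N, k] u^{h(N-k)} = ∏_{j<N} (1 + u^{4j+1}) (1 + u^{4j+3})`,
proved by raising `m` one step at a time with the two Pascal rules. Modulo `X^{n+1}`, with
`u = X^t` and `N ≥ 2n`, only the terms with `|N - k| ≤ n` survive; for those the Pochhammer
symbols `(q;q)_k`, `(q;q)_{2N-k}`, `(q;q)_{2N}` all agree with `(q;q)_∞`, so
`[2N, k] (q;q)_k (q;q)_{2N-k} = (q;q)_{2N}` makes `[2N, k] (q;q)_∞ ≡ 1`.
-/

def hexagonal (i : ℤ) : ℕ := (i * (2 * i - 1)).toNat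

lemma natCast_hexagonal (i : ℤ) : (hexagonal i : ℤ) = i * (2 * i - 1) :=
  Int.toNat_of_nonneg (by rcases le_or_gt i 0 with h | h <;> nlinarith)

lemma natAbs_le_hexagonal (i : ℤ) : i.natAbs ≤ hexagonal i := by
  zify
  rw [natCast_hexagonal]
  rcases le_or_gt i 0 with h | h
  · rw [abs_of_nonpos h]; nlinarith
  · rw [abs_of_pos h]; nlinarith

lemma sum_range_two_mul_hexagonal {M : Type*} [AddCommMonoid M] (φ : ℕ → M) (N : ℕ) :
    ∑ k ∈ range (2 * N + 1), φ (2 * hexagonal (N - k)) =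
      ∑ j ∈ range (2 * N + 1), φ (j * (j + 1)) := by
  refine sum_nbij' (fun k => if N ≤ k then 2 * (k - N) else 2 * (N - k) - 1)
    (fun j => if j % 2 = 0 then N + j / 2 else N - (j / 2 + 1)) ?_ ?_ ?_ ?_ ?_ <;>
    intro k hk <;> simp only [mem_range] at hk ⊢
  · split_ifs <;> omega
  · split_ifs <;> omega
  · split_ifs <;> omega
  · split_ifs <;> omega
  · congr 1
    split_ifs with h
    · zify [h]; rw [natCast_hexagonal]; ring
    · zify [(by omega : 1 ≤ 2 * (N - k)), (by omega : k ≤ N)]; rw [natCast_hexagonal]; ring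

section QAnalogues

variable {R : Type*} [CommRing R] (q : R)

def qPoch (n : ℕ) : R := ∏ j ∈ range n, (1 - q ^ (j + 1))

lemma qPoch_succ (n : ℕ) : qPoch q (n + 1) = qPoch q n * (1 - q ^ (n + 1)) :=
  prod_range_succ _ _

def qBinom : ℕ → ℕ → R
  | _, 0 => 1
  | 0, _ + 1 => 0
  | m + 1, k + 1 => qBinom m k + q ^ (k + 1) * qBinom m (k + 1)

@[simp] lemma qBinom_zero_right (m : ℕ) : qBinom q m 0 = 1 := by cases m <;> rfl

lemma qBinom_succ_succ (m k : ℕ) :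
    qBinom q (m + 1) (k + 1) = qBinom q m k + q ^ (k + 1) * qBinom q m (k + 1) := rfl

lemma qBinom_eq_zero_of_lt {m k : ℕ} (h : m < k) : qBinom q m k = 0 := by
  induction m generalizing k with
  | zero => obtain ⟨k, rfl⟩ := Nat.exists_eq_add_one_of_ne_zero h.ne'; rfl
  | succ m ih =>
    obtain ⟨k, rfl⟩ := Nat.exists_eq_add_one_of_ne_zero (Nat.ne_zero_of_lt h)
    rw [qBinom_succ_succ, ih (by omega), ih (by omega), mul_zero, add_zero]

-- No hypothesis `k < m` is needed: for `k ≥ m` both sides vanish, the right one through `q ^ 0`.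
lemma qBinom_succ_mul_one_sub (m k : ℕ) :
    qBinom q m (k + 1) * (1 - q ^ (k + 1)) = qBinom q m k * (1 - q ^ (m - k)) := by
  induction m generalizing k with
  | zero => simp [qBinom_eq_zero_of_lt q (Nat.succ_pos k)]
  | succ m ih =>
    cases k with
    | zero =>
      have := ih 0
      simp only [qBinom_zero_right, zero_add, pow_one, Nat.sub_zero, one_mul] at this ⊢
      rw [qBinom_succ_succ, qBinom_zero_right]
      linear_combination q * this
    | succ k =>
      rw [qBinom_succ_succ, qBinom_succ_succ, Nat.add_sub_add_right]
      rcases lt_or_ge k m with hkm | hkm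
      · have hexp : q ^ (k + 2) * q ^ (m - (k + 1)) = q ^ (k + 1) * q ^ (m - k) := by
          rw [← pow_add, ← pow_add]; congr 1; omega
        linear_combination q ^ (k + 2) * ih (k + 1) + ih k - qBinom q m (k + 1) * hexp
      · simp [qBinom_eq_zero_of_lt q (by omega : m < k + 1),
          qBinom_eq_zero_of_lt q (by omega : m < k + 2), Nat.sub_eq_zero_of_le hkm]

lemma qBinom_mul_qPoch_mul_qPoch {m k : ℕ} (hk : k ≤ m) :
    qBinom q m k * qPoch q k * qPoch q (m - k) = qPoch q m := by
  induction k with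
  | zero => simp [qPoch]
  | succ k ih =>
    have hsplit : qPoch q (m - k) = qPoch q (m - (k + 1)) * (1 - q ^ (m - k)) := by
      rw [show m - k = m - (k + 1) + 1 by omega, qPoch_succ]
    rw [← ih (by omega), qPoch_succ, hsplit]
    linear_combination qPoch q k * qPoch q (m - (k + 1)) * qBinom_succ_mul_one_sub q m k

lemma qBinom_succ_succ' (m k : ℕ) :
    qBinom q (m + 1) (k + 1) = qBinom q m (k + 1) + q ^ (m - k) * qBinom q m k := by
  rw [qBinom_succ_succ]
  linear_combination -qBinom_succ_mul_one_sub q m k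

variable (u : R)

def tripleProductSum (m c : ℕ) : R :=
  ∑ k ∈ range (m + 1), qBinom (u ^ 4) m k * u ^ hexagonal (c - k)

lemma tripleProductSum_eq_pow_add_sum (m c : ℕ) :
    tripleProductSum u m c = u ^ hexagonal c +
      ∑ k ∈ range (m + 1), qBinom (u ^ 4) m (k + 1) * u ^ hexagonal (c - (k + 1 : ℕ)) := by
  rw [tripleProductSum, sum_range_succ', sum_range_succ _ m,
    qBinom_eq_zero_of_lt _ (Nat.lt_succ_self m)]
  simp only [zero_mul, add_zero, qBinom_zero_right, one_mul, Nat.cast_zero, sub_zero]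
  ring

lemma tripleProductSum_succ_succ (m c : ℕ) :
    tripleProductSum u (m + 1) (c + 1) = tripleProductSum u m c * (1 + u ^ (4 * c + 1)) := by
  have hshift (k : ℕ) : hexagonal ((c + 1 : ℕ) - (k + 1 : ℕ)) = hexagonal (c - k) := by
    congr 1; push_cast; ring
  have hexp (k : ℕ) : (u ^ 4) ^ (k + 1) * u ^ hexagonal (c - k) =
      u ^ (4 * c + 1) * u ^ hexagonal (c - (k + 1 : ℕ)) := by
    rw [← pow_mul, ← pow_add, ← pow_add]
    congr 1
    zify
    rw [natCast_hexagonal, natCast_hexagonal]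
    ring
  have hexp0 : u ^ hexagonal (c + 1 : ℕ) = u ^ (4 * c + 1) * u ^ hexagonal c := by
    rw [← pow_add]
    congr 1
    zify
    rw [natCast_hexagonal, natCast_hexagonal]
    ring
  have hsum : ∑ k ∈ range (m + 1), qBinom (u ^ 4) (m + 1) (k + 1) *
        u ^ hexagonal ((c + 1 : ℕ) - (k + 1 : ℕ)) =
      tripleProductSum u m c + u ^ (4 * c + 1) * ∑ k ∈ range (m + 1),
        qBinom (u ^ 4) m (k + 1) * u ^ hexagonal (c - (k + 1 : ℕ)) := by
    rw [tripleProductSum, mul_sum, ← sum_add_distrib]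
    refine sum_congr rfl fun k _ => ?_
    rw [qBinom_succ_succ, hshift]
    linear_combination qBinom (u ^ 4) m (k + 1) * hexp k
  rw [tripleProductSum, sum_range_succ', hsum, tripleProductSum_eq_pow_add_sum u m c,
    qBinom_zero_right, Nat.cast_zero, sub_zero, hexp0]
  ring

lemma tripleProductSum_succ {m c : ℕ} (hc : c ≤ m) :
    tripleProductSum u (m + 1) c = tripleProductSum u m c * (1 + u ^ (4 * (m - c) + 3)) := by
  have hexp {k : ℕ} (hk : k ≤ m) : (u ^ 4) ^ (m - k) * u ^ hexagonal (c - (k + 1 : ℕ)) =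
      u ^ (4 * (m - c) + 3) * u ^ hexagonal (c - k) := by
    rw [← pow_mul, ← pow_add, ← pow_add]
    congr 1
    zify [hk, hc]
    rw [natCast_hexagonal, natCast_hexagonal]
    ring
  have hsum : ∑ k ∈ range (m + 1), qBinom (u ^ 4) (m + 1) (k + 1) *
        u ^ hexagonal (c - (k + 1 : ℕ)) =
      ∑ k ∈ range (m + 1), qBinom (u ^ 4) m (k + 1) * u ^ hexagonal (c - (k + 1 : ℕ)) +
        u ^ (4 * (m - c) + 3) * tripleProductSum u m c := by
    rw [tripleProductSum, mul_sum, ← sum_add_distrib]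
    refine sum_congr rfl fun k hk => ?_
    rw [qBinom_succ_succ']
    linear_combination qBinom (u ^ 4) m k * hexp (Nat.lt_succ_iff.mp (mem_range.mp hk))
  rw [tripleProductSum, sum_range_succ', hsum, tripleProductSum_eq_pow_add_sum u m c,
    qBinom_zero_right, Nat.cast_zero, sub_zero]
  ring

theorem tripleProductSum_two_mul (N : ℕ) :
    tripleProductSum u (2 * N) N =
      ∏ j ∈ range N, (1 + u ^ (4 * j + 1)) * (1 + u ^ (4 * j + 3)) := by
  induction N with
  | zero => simp [tripleProductSum, hexagonal]
  | succ N ih =>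
    rw [show 2 * (N + 1) = 2 * N + 1 + 1 by ring, tripleProductSum_succ_succ,
      tripleProductSum_succ u (by omega), ih, prod_range_succ, show 2 * N - N = N by omega]
    ring

lemma qPoch_eq_of_pow_eq_zero {q : R} {n M : ℕ} (hq : q ^ (n + 1) = 0) (hM : n ≤ M) :
    qPoch q M = qPoch q n := by
  induction M, hM using Nat.le_induction with
  | base => rfl
  | succ M hM ih => rw [qPoch_succ, ih, pow_eq_zero_of_le (by omega) hq, sub_zero, mul_one]

lemma isUnit_qPoch {q : R} (hq : IsNilpotent q) (n : ℕ) : IsUnit (qPoch q n) :=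
  IsUnit.prod_iff.mpr fun j _ => (hq.pow_succ j).isUnit_one_sub

theorem qPoch_mul_prod_eq_sum_pow_hexagonal {n N : ℕ} (hu : u ^ (n + 1) = 0) (hN : 2 * n ≤ N) :
    qPoch (u ^ 4) n * ∏ j ∈ range N, (1 + u ^ (4 * j + 1)) * (1 + u ^ (4 * j + 3)) =
      ∑ k ∈ range (2 * N + 1), u ^ hexagonal (N - k) := by
  rw [← tripleProductSum_two_mul, tripleProductSum, mul_sum]
  refine sum_congr rfl fun k hk => ?_
  by_cases hlarge : n < hexagonal (N - k)
  · rw [pow_eq_zero_of_le hlarge hu, mul_zero, mul_zero]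
  have hwindow := natAbs_le_hexagonal (N - k)
  have hk := mem_range.mp hk
  have hq : (u ^ 4) ^ (n + 1) = 0 := by
    rw [← pow_mul]; exact pow_eq_zero_of_le (by omega) hu
  have hprod := qBinom_mul_qPoch_mul_qPoch (u ^ 4) (by omega : k ≤ 2 * N)
  rw [qPoch_eq_of_pow_eq_zero hq (by omega : n ≤ k),
    qPoch_eq_of_pow_eq_zero hq (by omega : n ≤ 2 * N - k),
    qPoch_eq_of_pow_eq_zero hq (by omega : n ≤ 2 * N)] at hprod
  have hinv : qPoch (u ^ 4) n * qBinom (u ^ 4) (2 * N) k = 1 :=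
    (isUnit_qPoch ⟨n + 1, hq⟩ n).mul_right_cancel (by linear_combination hprod)
  linear_combination u ^ hexagonal (N - k) * hinv

end QAnalogues

section PowerSeries

variable {R : Type*} [CommRing R]

lemma mk_span_X_pow_eq_iff {n : ℕ} {a b : R⟦X⟧} :
    Ideal.Quotient.mk (Ideal.span {X ^ n}) a = Ideal.Quotient.mk (Ideal.span {X ^ n}) b ↔
      ∀ m < n, coeff m a = coeff m b := by
  simp only [Ideal.Quotient.mk_eq_mk_iff_sub_mem, Ideal.mem_span_singleton, X_pow_dvd_iff,
    map_sub, sub_eq_zero]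

lemma coeff_prod_range_eq_of_lt (F : ℕ → R⟦X⟧) (hF : ∀ j, X ^ (j + 1) ∣ F j - 1) {m M : ℕ}
    (hM : m < M) : coeff m (∏ j ∈ range M, F j) = coeff m (∏ j ∈ range (m + 1), F j) := by
  induction M, hM using Nat.le_induction with
  | base => rfl
  | succ M hM ih =>
    obtain ⟨c, hc⟩ := hF M
    rw [prod_range_succ, ← ih, show F M = 1 + X ^ (M + 1) * c by rw [← hc]; ring, mul_add,
      mul_one, map_add, mul_left_comm, coeff_X_pow_mul', if_neg (by omega), add_zero]

lemma mk_mk_coeff_prod_range (F : ℕ → R⟦X⟧) (hF : ∀ j, X ^ (j + 1) ∣ F j - 1) {n M : ℕ}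
    (hM : n ≤ M) :
    Ideal.Quotient.mk (Ideal.span {X ^ n}) (mk fun m => coeff m (∏ j ∈ range (m + 1), F j)) =
      Ideal.Quotient.mk (Ideal.span {X ^ n}) (∏ j ∈ range M, F j) :=
  mk_span_X_pow_eq_iff.mpr fun m hm => by
    rw [coeff_mk, coeff_prod_range_eq_of_lt F hF (hm.trans_le hM)]

end PowerSeries

def triangularSeries (t : ℕ) : ℤ⟦X⟧ :=
  mk fun m => ∑ k ∈ range (m + 1), if 2 * m = t * k * (k + 1) then 1 else 0

lemma mk_triangularSeries {t n : ℕ} (ht : 0 < t) (N : ℕ) (hN : n ≤ 2 * N + 1) :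
    Ideal.Quotient.mk (Ideal.span {(X : ℤ⟦X⟧) ^ n}) (triangularSeries t) =
      Ideal.Quotient.mk (Ideal.span {X ^ n})
        (∑ k ∈ range (2 * N + 1), X ^ (t * hexagonal (N - k))) := by
  refine mk_span_X_pow_eq_iff.mpr fun m hm => ?_
  have hdouble (h : ℕ) : (m = t * h) ↔ (2 * m = t * (2 * h)) := by
    rw [mul_left_comm, Nat.mul_left_cancel_iff two_pos]
  simp only [triangularSeries, coeff_mk, map_sum, coeff_X_pow, hdouble, mul_assoc]
  rw [sum_range_two_mul_hexagonal (fun x => if 2 * m = t * x then (1 : ℤ) else 0)]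
  refine sum_subset (range_subset_range.mpr (by omega : m + 1 ≤ 2 * N + 1)) fun j hj hjm => ?_
  simp only [mem_range, not_lt] at hj hjm
  have := Nat.le_mul_of_pos_left (j * (j + 1)) ht
  rw [if_neg (by nlinarith)]

lemma map_theta_eq_map_triangularSeries (t : ℕ) :
    map (Int.castRingHom (ZMod 2)) (theta t) =
      map (Int.castRingHom (ZMod 2)) (triangularSeries t) := by
  ext m
  simp only [theta, triangularSeries, coeff_map, coeff_mk, map_sum]
  refine sum_congr rfl fun k _ => ?_
  split_ifs <;> simp

lemma isUnit_euler {t : ℕ} (ht : 0 < t) : IsUnit (euler t) := by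
  rw [isUnit_iff_constantCoeff, ← coeff_zero_eq_constantCoeff_apply, euler, coeff_mk]
  simp [ht.ne']

theorem triangularSeries_eq {t : ℕ} (ht : 0 < t) :
    triangularSeries t = euler (4 * t) * aqk t (4 * t) * aqk (3 * t) (4 * t) := by
  ext n
  set π := Ideal.Quotient.mk (Ideal.span {(X : ℤ⟦X⟧) ^ (n + 1)})
  set u := π (X ^ t)
  have hpow (e : ℕ) : π (X ^ (t * e)) = u ^ e := by rw [pow_mul, map_pow]
  have hu : u ^ (n + 1) = 0 := by
    rw [← hpow, Ideal.Quotient.eq_zero_iff_mem, Ideal.mem_span_singleton]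
    exact pow_dvd_pow _ (Nat.le_mul_of_pos_left _ ht)
  have hu4 : (u ^ 4) ^ (n + 1) = 0 := by
    rw [← pow_mul]; exact pow_eq_zero_of_le (by omega) hu
  have hE : π (euler (4 * t)) = qPoch (u ^ 4) n := by
    rw [euler, mk_mk_coeff_prod_range _ (fun j => ?_) le_rfl, map_prod,
      ← qPoch_eq_of_pow_eq_zero hu4 n.le_succ]
    · refine prod_congr rfl fun j _ => ?_
      rw [map_sub, map_one, show 4 * t * (j + 1) = t * (4 * (j + 1)) by ring, hpow, pow_mul]
    · rw [sub_sub_cancel_left]; exact (pow_dvd_pow _ (by nlinarith)).neg_right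
  have hA {a : ℕ} (ha : 0 < a) :
      π (aqk (a * t) (4 * t)) = ∏ j ∈ range (2 * n + 1), (1 + u ^ (4 * j + a)) := by
    rw [aqk, mk_mk_coeff_prod_range _ (fun j => ?_) (by omega : n + 1 ≤ 2 * n + 1), map_prod]
    · refine prod_congr rfl fun j _ => ?_
      rw [map_add, map_one, show a * t + 4 * t * j = t * (4 * j + a) by ring, hpow]
    · rw [add_sub_cancel_left]; exact pow_dvd_pow _ (by nlinarith)
  have hA1 := hA one_pos
  rw [one_mul] at hA1
  refine mk_span_X_pow_eq_iff.mp ?_ n (lt_add_one n)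
  rw [mk_triangularSeries ht (2 * n + 1) (by omega), map_mul, map_mul, hE, hA1, hA three_pos,
    mul_assoc, ← prod_mul_distrib, qPoch_mul_prod_eq_sum_pow_hexagonal u hu (by omega), map_sum]
  exact sum_congr rfl fun k _ => hpow _

/-- p_{t,t}(n) ≡ C̄_{4t,t}(n) (mod 2) for all t ≥ 1, n ≥ 0. -/
theorem stmt11 (t : ℕ) (ht : 0 < t) (f g : ℕ → ℤ)
    (hf : PowerSeries.mk f * euler 1 = theta t)
    (hg : PowerSeries.mk g * euler 1
        = euler (4 * t) * aqk t (4 * t) * aqk (3 * t) (4 * t)) (n : ℕ) :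
    f n ≡ g n [ZMOD 2] := by
  set σ := PowerSeries.map (Int.castRingHom (ZMod 2))
  have hcancel : σ (PowerSeries.mk f) * σ (euler 1) = σ (PowerSeries.mk g) * σ (euler 1) := by
    rw [← map_mul, ← map_mul, hf, hg, ← triangularSeries_eq ht,
      map_theta_eq_map_triangularSeries]
  have hfg := ((isUnit_euler one_pos).map σ).mul_right_cancel hcancel
  have hn := congrArg (coeff n) hfg
  rwa [coeff_map, coeff_map, coeff_mk, coeff_mk, eq_intCast, eq_intCast,
    ZMod.intCast_eq_intCast_iff] at hn
end
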